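/- arXiv:1611.07468 — 2 statements merged into one kernel-verified Lean document; each statement's English description precedes it below -/
import Mathlib

section
/- Let G and H be connected graphs and U a non-empty subset of V(G). Then |E(G(U)ΠH)| = |E(G)|·|V(H)| + |E(H)|·|U|, where G(U)ΠH is the generalized hierarchical product. -/
open SimpleGraph Finset
open scoped Classical

noncomputable section

/-- The generalized hierarchical product `G(U)ΠH`. -/
def hierProd {α β : Type*} (G : SimpleGraph α) (H : SimpleGraph β) (U : Set α) :
    SimpleGraph (α × β) where
  Adj p q := (p.1 = q.1 ∧ p.1 ∈ U ∧ H.Adj p.2 q.2) ∨ (p.2 = q.2 ∧ G.Adj p.1 q.1)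
  symm := by
    constructor
    rintro p q (⟨h1, h2, h3⟩ | ⟨h1, h2⟩)
    · exact Or.inl ⟨h1.symm, h1 ▸ h2, h3.symm⟩
    · exact Or.inr ⟨h1.symm, h2.symm⟩
  loopless := by
    constructor
    rintro p (⟨_, _, h⟩ | ⟨_, h⟩)
    · exact H.irrefl h
    · exact G.irrefl h

/-- The F-index (forgotten topological index): sum of cubes of degrees. -/
def Findex {α : Type*} [Fintype α] (G : SimpleGraph α) : ℕ :=
  ∑ v, G.degree v ^ 3

/-- The first Zagreb index: sum of squares of degrees. -/
def M1 {α : Type*} [Fintype α] (G : SimpleGraph α) : ℕ :=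
  ∑ v, G.degree v ^ 2

/-- The general first Zagreb index with exponent `n`. -/
def xiIndex {α : Type*} [Fintype α] (G : SimpleGraph α) (n : ℕ) : ℕ :=
  ∑ v, G.degree v ^ n

/-- The redefined Zagreb index `ReZG(G) = Σ_{uv∈E} d(u)d(v)(d(u)+d(v))`. -/
def ReZG {α : Type*} [Fintype α] (G : SimpleGraph α) : ℕ :=
  ∑ e ∈ G.edgeFinset,
    Sym2.lift ⟨fun u v => G.degree u * G.degree v * (G.degree u + G.degree v),
      fun u v => by ring⟩ e

/-- The subdivision graph `S(G)`: each edge replaced by a path of length two. -/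
def Sgraph {α : Type*} (G : SimpleGraph α) : SimpleGraph (α ⊕ ↥G.edgeSet) where
  Adj x y :=
    match x, y with
    | Sum.inl u, Sum.inr e => u ∈ (e : Sym2 α)
    | Sum.inr e, Sum.inl u => u ∈ (e : Sym2 α)
    | _, _ => False
  symm := by constructor; rintro (u | e) (v | f) h <;> simp_all
  loopless := by constructor; rintro (u | e) h <;> simp_all

/-- The graph on `V(G) ⊕ E(G)` whose only edges are the original edges of `G`. -/
def Ograph {α : Type*} (G : SimpleGraph α) : SimpleGraph (α ⊕ ↥G.edgeSet) where
  Adj x y :=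
    match x, y with
    | Sum.inl u, Sum.inl v => G.Adj u v
    | _, _ => False
  symm := by constructor; rintro (u | e) (v | f) h <;> simp_all <;> exact h.symm
  loopless := by constructor; rintro (u | e) h <;> simp_all

/-- The graph on `V(G) ⊕ E(G)` whose edges join pairs of adjacent edges of `G`
(line-graph adjacency). -/
def Lgraph {α : Type*} (G : SimpleGraph α) : SimpleGraph (α ⊕ ↥G.edgeSet) where
  Adj x y :=
    match x, y with
    | Sum.inr e, Sum.inr f => e ≠ f ∧ ∃ u, u ∈ (e : Sym2 α) ∧ u ∈ (f : Sym2 α)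
    | _, _ => False
  symm := by
    constructor
    rintro (u | e) (v | f) h <;> simp_all
    exact ⟨Ne.symm h.1, h.2.imp fun u hu => hu.symm⟩
  loopless := by constructor; rintro (u | e) h <;> simp_all

/-- The triangle parallel graph `R(G)`. -/
def Rgraph {α : Type*} (G : SimpleGraph α) : SimpleGraph (α ⊕ ↥G.edgeSet) :=
  Sgraph G ⊔ Ograph G

/-- The line superposition graph `Q(G)`. -/
def Qgraph {α : Type*} (G : SimpleGraph α) : SimpleGraph (α ⊕ ↥G.edgeSet) :=
  Sgraph G ⊔ Lgraph G

/-- The total graph `T(G)`. -/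
def Tgraph {α : Type*} (G : SimpleGraph α) : SimpleGraph (α ⊕ ↥G.edgeSet) :=
  Sgraph G ⊔ Ograph G ⊔ Lgraph G

/-- The F-sum `G +_F H`, where `K` is one of `S(G), R(G), Q(G), T(G)`:
the generalized hierarchical product `K(V(G))ΠH`. -/
def FSum {α β : Type*} {G : SimpleGraph α} (K : SimpleGraph (α ⊕ ↥G.edgeSet))
    (H : SimpleGraph β) : SimpleGraph ((α ⊕ ↥G.edgeSet) × β) :=
  hierProd K H (Set.range Sum.inl)

end
/-! The `H`-edges of `G(U)ΠH` sit exactly over the vertices of `U`, so the neighbourhood of `(u, v)`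
is its neighbourhood in the box product `G □ H` when `u ∈ U` and in `G □ ⊥` otherwise. Hence
`deg (u, v) = deg_G u + [u ∈ U] deg_H v`, and the handshake lemma turns the degree sum
`|V(H)| · 2|E(G)| + |U| · 2|E(H)|` into the edge count. -/

section HierProd

variable {α β : Type*} (G : SimpleGraph α) (H : SimpleGraph β) (U : Set α)

theorem neighborSet_hierProd (p : α × β) :
    (hierProd G H U).neighborSet p = (G □ if p.1 ∈ U then H else ⊥).neighborSet p := by
  ext q
  split_ifs with hu <;> simp only [mem_neighborSet, hierProd, boxProd_adj, bot_adj, hu] <;> tauto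

variable [Fintype α] [Fintype β]

theorem degree_hierProd (u : α) (v : β) :
    (hierProd G H U).degree (u, v) = G.degree u + if u ∈ U then H.degree v else 0 := by
  have h := neighborSet_hierProd G H U (u, v)
  split_ifs at h ⊢ <;>
    rw [← card_neighborSet_eq_degree, Fintype.card_congr (Equiv.setCongr h),
      card_neighborSet_eq_degree, degree_boxProd]
  exact congrArg _ (bot_degree v)

theorem sum_degree_hierProd :
    ∑ p, (hierProd G H U).degree p =
      Fintype.card β * ∑ u, G.degree u + #U.toFinset * ∑ v, H.degree v := by
  simp only [Fintype.sum_prod_type, degree_hierProd, sum_add_distrib, sum_const, card_univ,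
    smul_eq_mul, sum_ite_irrel, mul_zero, ← mul_sum, ← Set.mem_toFinset, sum_ite_mem,
    univ_inter]

end HierProd

theorem card_edges_hierProd_general {α β : Type*} [Fintype α] [Fintype β]
    (G : SimpleGraph α) (H : SimpleGraph β) (U : Set α) :
    (hierProd G H U).edgeFinset.card =
      G.edgeFinset.card * Fintype.card β + H.edgeFinset.card * U.toFinset.card := by
  have handshake := sum_degree_hierProd G H U
  rw [sum_degrees_eq_twice_card_edges, sum_degrees_eq_twice_card_edges,
    sum_degrees_eq_twice_card_edges] at handshake
  linarith

theorem card_edges_hierProd {α β : Type*} [Fintype α] [Fintype β]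
    (G : SimpleGraph α) (H : SimpleGraph β) (U : Set α)
    (hG : G.Connected) (hH : H.Connected) (hU : U.Nonempty) :
    (hierProd G H U).edgeFinset.card =
      G.edgeFinset.card * Fintype.card β + H.edgeFinset.card * U.toFinset.card :=
  card_edges_hierProd_general G H U
end

section
/- Let G and H be connected graphs and U a non-empty subset of V(G). Then the generalized hierarchical product G(U)ΠH is connected if and only if G and H are connected. -/
open SimpleGraph Finset
open scoped Classical

/-! `hierProd G H U` is a subgraph of `G □ H`, so its connectivity forces that of `G` and `H`.
Conversely it contains every layer `V(G) × {b}` and, over a vertex `u ∈ U`, the fibre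
`{u} × V(H)`; two vertices are joined by moving within the first one's layer to the column of `u`,
along that fibre, and within the second one's layer. -/

section HierProd

variable {α β : Type*} {G : SimpleGraph α} {H : SimpleGraph β} {U : Set α}

theorem hierProd_le_boxProd : hierProd G H U ≤ G □ H := by
  rintro p q (⟨hp, -, hH⟩ | ⟨hp, hG⟩)
  · exact Or.inr ⟨hH, hp⟩
  · exact Or.inl ⟨hG, hp⟩

def hierProdLayer (b : β) : G →g hierProd G H U where
  toFun a := (a, b)
  map_rel' h := Or.inr ⟨rfl, h⟩

def hierProdFibre {u : α} (hu : u ∈ U) : H →g hierProd G H U where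
  toFun b := (u, b)
  map_rel' h := Or.inl ⟨rfl, hu, h⟩

theorem SimpleGraph.Preconnected.hierProd (hG : G.Preconnected) (hH : H.Preconnected)
    (hU : U.Nonempty) :
    (_root_.hierProd G H U).Preconnected := by
  obtain ⟨u, hu⟩ := hU
  rintro ⟨a₁, b₁⟩ ⟨a₂, b₂⟩
  have toFibre : (_root_.hierProd G H U).Reachable (a₁, b₁) (u, b₁) :=
    (hG a₁ u).map (hierProdLayer b₁)
  have alongFibre : (_root_.hierProd G H U).Reachable (u, b₁) (u, b₂) :=
    (hH b₁ b₂).map (hierProdFibre hu)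
  have fromFibre : (_root_.hierProd G H U).Reachable (u, b₂) (a₂, b₂) :=
    (hG u a₂).map (hierProdLayer b₂)
  exact toFibre.trans (alongFibre.trans fromFibre)

theorem SimpleGraph.Connected.hierProd (hG : G.Connected) (hH : H.Connected) (hU : U.Nonempty) :
    (_root_.hierProd G H U).Connected :=
  have := hG.nonempty
  have := hH.nonempty
  ⟨hG.preconnected.hierProd hH.preconnected hU⟩

end HierProd

theorem hierProd_connected_iff_general {α β : Type*}
    (G : SimpleGraph α) (H : SimpleGraph β) (U : Set α) (hU : U.Nonempty) :
    (hierProd G H U).Connected ↔ G.Connected ∧ H.Connected :=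
  ⟨fun h => connected_boxProd.1 (h.mono hierProd_le_boxProd),
    fun ⟨hG, hH⟩ => hG.hierProd hH hU⟩

theorem hierProd_connected_iff {α β : Type*} [Fintype α] [Fintype β]
    (G : SimpleGraph α) (H : SimpleGraph β) (U : Set α) (hU : U.Nonempty) :
    (hierProd G H U).Connected ↔ G.Connected ∧ H.Connected :=
  hierProd_connected_iff_general G H U hU
end
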